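/- Let ρ₁, σ₁ and ρ₂, σ₂ be density operators and suppose there exists a test Q with 0 ≤ Q ≤ I, Tr((I−Q)ρ₁) ≤ ε_ρ, and Tr(Qσ₁) ≤ ε_σ (i.e., β_{ε_ρ}(ρ₁‖σ₁) ≤ ε_σ). Then there exists a quantum channel E with T(E(ρ₁), ρ₂) ≤ ε_ρ and T(E(σ₁), σ₂) ≤ ε_σ, for every choice of target states ρ₂, σ₂. -/

import Mathlib

/-!
The measure-and-prepare channel `E(X) = Tr(Q X) ρ₂ + Tr((1 - Q) X) σ₂` sends `ρ₁` to
`ρ₂ + c (σ₂ - ρ₂)` with `0 ≤ c = Tr((1 - Q) ρ₁) ≤ ε_ρ`, and `σ₁` to `σ₂ + s (ρ₂ - σ₂)` with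
`0 ≤ s = Tr(Q σ₁) ≤ ε_σ`. It remains to see `T(c σ, c ρ) ≤ c` for states `ρ, σ`: a difference
`P - N` of positive semidefinite matrices has trace norm at most `Tr P + Tr N`, because in an
eigenbasis of `P - N` each eigenvalue is `P_ii - N_ii`, of absolute value at most `P_ii + N_ii`.
-/

open Matrix Filter
open scoped Matrix ComplexOrder

variable {n : Type*} [Fintype n] [DecidableEq n]

/-- `ρ` is a density operator: positive semidefinite with unit trace. -/
def IsDensity (ρ : Matrix n n ℂ) : Prop := ρ.PosSemidef ∧ ρ.trace = 1

/-- Optimal type-II error `β_x(ρ‖σ)` in binary quantum hypothesis testing: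
the minimum of `Tr(σQ)` over tests `0 ≤ Q ≤ 1` with `Tr(ρQ) ≥ 1 − x`. -/
noncomputable def betaErr (x : ℝ) (ρ σ : Matrix n n ℂ) : ℝ :=
  sInf {v : ℝ | ∃ Q : Matrix n n ℂ, Q.PosSemidef ∧ (1 - Q).PosSemidef ∧
    1 - x ≤ ((ρ * Q).trace).re ∧ v = ((σ * Q).trace).re}

open Classical in
/-- Real power of a Hermitian matrix via the spectral decomposition. -/
noncomputable def hrpow (A : Matrix n n ℂ) (α : ℝ) : Matrix n n ℂ :=
  if h : A.IsHermitian then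
    (h.eigenvectorUnitary : Matrix n n ℂ) *
      Matrix.diagonal (fun i => ((h.eigenvalues i ^ α : ℝ) : ℂ)) *
      star (h.eigenvectorUnitary : Matrix n n ℂ)
  else A

open Classical in
/-- Minimal eigenvalue of a Hermitian matrix. -/
noncomputable def lamMin (A : Matrix n n ℂ) : ℝ :=
  if h : A.IsHermitian then ⨅ i, h.eigenvalues i else 0

open Classical in
/-- Maximal eigenvalue of a Hermitian matrix. -/
noncomputable def lamMax (A : Matrix n n ℂ) : ℝ :=
  if h : A.IsHermitian then ⨆ i, h.eigenvalues i else 0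

open Classical in
/-- Pinching map `P_σ(X)` with respect to the eigenspaces of `σ`:
in the eigenbasis of `σ`, off-diagonal blocks between distinct eigenvalues are erased. -/
noncomputable def pinch (σ X : Matrix n n ℂ) : Matrix n n ℂ :=
  if h : σ.IsHermitian then
    (h.eigenvectorUnitary : Matrix n n ℂ) *
      (Matrix.of fun i j =>
        if h.eigenvalues i = h.eigenvalues j then
          (star (h.eigenvectorUnitary : Matrix n n ℂ) * X *
            (h.eigenvectorUnitary : Matrix n n ℂ)) i j
        else 0) *
      star (h.eigenvectorUnitary : Matrix n n ℂ)
  else X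

/-- Trace distance `T(A,B) = (1/2)‖A − B‖₁`. -/
noncomputable def traceDist (A B : Matrix n n ℂ) : ℝ :=
  (1 / 2) * ((((Matrix.posSemidef_conjTranspose_mul_self (A - B)).1.eigenvectorUnitary :
      Matrix n n ℂ) *
    Matrix.diagonal (((↑) : ℝ → ℂ) ∘ (Real.sqrt ·) ∘
      (Matrix.posSemidef_conjTranspose_mul_self (A - B)).1.eigenvalues) *
    (star (Matrix.posSemidef_conjTranspose_mul_self (A - B)).1.eigenvectorUnitary :
      Matrix n n ℂ)).trace).re

/-- `n`-fold tensor (Kronecker) power of a matrix. -/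
noncomputable def tensorPow {d : ℕ} (ρ : Matrix (Fin d) (Fin d) ℂ) (m : ℕ) :
    Matrix (Fin m → Fin d) (Fin m → Fin d) ℂ :=
  fun f g => ∏ i, ρ (f i) (g i)

/-- A quantum channel from a `d₁`- to a `d₂`-dimensional system, presented by
Kraus operators (equivalently, a completely positive trace-preserving map). -/
structure QChannel (d₁ d₂ : ℕ) where
  k : ℕ
  K : Fin k → Matrix (Fin d₂) (Fin d₁) ℂ
  tp : ∑ i, (K i)ᴴ * K i = 1

/-- Action of a quantum channel on a matrix. -/
noncomputable def QChannel.apply {d₁ d₂ : ℕ} (E : QChannel d₁ d₂)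
    (X : Matrix (Fin d₁) (Fin d₁) ℂ) : Matrix (Fin d₂) (Fin d₂) ℂ :=
  ∑ i, E.K i * X * (E.K i)ᴴ

/-- Classical Rényi relative entropy of a (commuting) pair of matrices,
`D_α(A‖B) = (1/(α−1)) ln Tr(A^α B^{1−α})`. -/
noncomputable def renyiDiv (α : ℝ) (A B : Matrix n n ℂ) : ℝ :=
  (α - 1)⁻¹ * Real.log (((hrpow A α * hrpow B (1 - α)).trace).re)

/-- Minimal (sandwiched) Rényi relative entropy, `α ≤ 1/2` branch:
`D̃_α(ρ‖σ) = (1/(α−1)) ln Tr((√σ ρ^{α/(1−α)} √σ)^{1−α})`. -/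
noncomputable def minRenyiDiv (α : ℝ) (ρ σ : Matrix n n ℂ) : ℝ :=
  (α - 1)⁻¹ * Real.log
    (((hrpow (hrpow σ (1 / 2) * hrpow ρ (α / (1 - α)) * hrpow σ (1 / 2)) (1 - α)).trace).re)

open scoped MatrixOrder

lemma Matrix.trace_conjStarAlgAut {R : Type*} [CommRing R] [StarRing R]
    (u : unitary (Matrix n n R)) (A : Matrix n n R) :
    (Unitary.conjStarAlgAut R _ u A).trace = A.trace := by
  rw [Unitary.conjStarAlgAut_apply, Matrix.trace_mul_cycle, Unitary.coe_star_mul_self,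
    Matrix.one_mul]

lemma Matrix.trace_mul_add_trace_one_sub_mul {R : Type*} [Ring R] (Q X : Matrix n n R) :
    (Q * X).trace + ((1 - Q) * X).trace = X.trace := by
  rw [← Matrix.trace_add, ← Matrix.add_mul, add_sub_cancel, Matrix.one_mul]

lemma Matrix.conjTranspose_cfcSqrt (A : Matrix n n ℂ) : (CFC.sqrt A)ᴴ = CFC.sqrt A :=
  (CFC.sqrt_nonneg A).isSelfAdjoint

lemma Matrix.PosSemidef.trace_mul_nonneg {A B : Matrix n n ℂ} (hA : A.PosSemidef)
    (hB : B.PosSemidef) : 0 ≤ (A * B).trace := by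
  rw [← CFC.sqrt_mul_sqrt_self A hA.nonneg, Matrix.mul_assoc, Matrix.trace_mul_comm]
  simpa [Matrix.conjTranspose_cfcSqrt] using
    (hB.mul_mul_conjTranspose_same (CFC.sqrt A)).trace_nonneg

lemma Matrix.IsHermitian.trace_abs {D : Matrix n n ℂ} (hD : D.IsHermitian) :
    (CFC.abs D).trace = ∑ i, ((|hD.eigenvalues i| : ℝ) : ℂ) := by
  rw [CFC.abs_eq_cfc_norm D hD.isSelfAdjoint, hD.cfc_eq, Matrix.IsHermitian.cfc,
    Matrix.trace_conjStarAlgAut, Matrix.trace_diagonal]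
  rfl

lemma Matrix.IsHermitian.sum_abs_eigenvalues_le {P N : Matrix n n ℂ} (hP : P.PosSemidef)
    (hN : N.PosSemidef) (hD : (P - N).IsHermitian) :
    ∑ i, |hD.eigenvalues i| ≤ (P.trace + N.trace).re := by
  set u := star hD.eigenvectorUnitary
  set P' := Unitary.conjStarAlgAut ℂ _ u P
  set N' := Unitary.conjStarAlgAut ℂ _ u N
  have hpos {A : Matrix n n ℂ} (hA : A.PosSemidef) (i : n) :
      0 ≤ (Unitary.conjStarAlgAut ℂ _ u A i i).re := by
    rw [Unitary.conjStarAlgAut_apply]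
    exact (Complex.nonneg_iff.mp (hA.mul_mul_conjTranspose_same _).diag_nonneg).1
  have heig (i : n) : hD.eigenvalues i = (P' i i).re - (N' i i).re := by
    have h := hD.conjStarAlgAut_star_eigenvectorUnitary
    rw [map_sub] at h
    simpa [P', N', u, Unitary.coe_star] using congrArg (fun M : Matrix n n ℂ => (M i i).re) h.symm
  calc ∑ i, |hD.eigenvalues i| ≤ ∑ i, ((P' i i).re + (N' i i).re) := by
        refine Finset.sum_le_sum fun i _ => ?_
        have := hpos hP i
        have := hpos hN i
        rw [heig, abs_le]; constructor <;> linarith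
    _ = (P'.trace + N'.trace).re := by simp [Matrix.trace, Finset.sum_add_distrib]
    _ = (P.trace + N.trace).re := by simp only [P', N', Matrix.trace_conjStarAlgAut]

lemma traceDist_eq_abs (A B : Matrix n n ℂ) : traceDist A B = (CFC.abs (A - B)).trace.re / 2 := by
  have h : (star (A - B) * (A - B)).IsHermitian := (posSemidef_conjTranspose_mul_self _).1
  rw [CFC.abs, CFC.sqrt_eq_real_sqrt _ (star_mul_self_nonneg _), cfcₙ_eq_cfc, h.cfc_eq,
    traceDist, mul_comm, ← div_eq_mul_one_div]
  rfl

lemma traceDist_le_of_sub_eq {A B P N : Matrix n n ℂ} (hP : P.PosSemidef) (hN : N.PosSemidef)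
    (h : A - B = P - N) : traceDist A B ≤ (P.trace + N.trace).re / 2 := by
  have hD : (P - N).IsHermitian := hP.1.sub hN.1
  rw [traceDist_eq_abs, h, hD.trace_abs, Complex.re_sum]
  simp only [Complex.ofReal_re]
  linarith [hD.sum_abs_eigenvalues_le hP hN]

lemma traceDist_le_of_sub_eq_smul {A B ρ σ : Matrix n n ℂ} (hρ : IsDensity ρ) (hσ : IsDensity σ)
    {c : ℂ} (hc : 0 ≤ c) (h : A - B = c • σ - c • ρ) : traceDist A B ≤ c.re := by
  have := traceDist_le_of_sub_eq (hσ.1.smul hc) (hρ.1.smul hc) h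
  rw [Matrix.trace_smul, Matrix.trace_smul, hσ.2, hρ.2] at this
  simpa using this

section MeasureAndPrepare

variable {m : Type*} [Fintype m] [DecidableEq m]

noncomputable def prepareKraus (R : Matrix m m ℂ) (M : Matrix n n ℂ) (p : m × n) : Matrix m n ℂ :=
  CFC.sqrt R * single p.1 p.2 (1 : ℂ) * CFC.sqrt M

lemma sum_prepareKraus_conjTranspose_mul {R : Matrix m m ℂ} {M : Matrix n n ℂ}
    (hR : R.PosSemidef) (hM : M.PosSemidef) :
    ∑ p, (prepareKraus R M p)ᴴ * prepareKraus R M p = R.trace • M := by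
  have h (p : m × n) : (prepareKraus R M p)ᴴ * prepareKraus R M p =
      CFC.sqrt M * (R p.1 p.1 • single p.2 p.2 (1 : ℂ)) * CFC.sqrt M := by
    have : single p.2 p.1 (1 : ℂ) * (CFC.sqrt R * CFC.sqrt R) * single p.1 p.2 (1 : ℂ) =
        R p.1 p.1 • single p.2 p.2 (1 : ℂ) := by
      rw [CFC.sqrt_mul_sqrt_self R hR.nonneg, single_mul_mul_single, smul_single]
      simp
    simp only [prepareKraus, conjTranspose_mul, Matrix.conjTranspose_cfcSqrt,
      conjTranspose_single, star_one]
    rw [← this]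
    simp only [Matrix.mul_assoc]
  simp only [h, Fintype.sum_prod_type, ← Finset.mul_sum, ← Finset.sum_mul, ← Finset.smul_sum,
    sum_single_one, ← Finset.sum_smul]
  rw [Matrix.mul_smul, Matrix.smul_mul, Matrix.mul_one, CFC.sqrt_mul_sqrt_self M hM.nonneg]
  rfl

lemma sum_prepareKraus_mul_mul_conjTranspose {R : Matrix m m ℂ} {M : Matrix n n ℂ}
    (hR : R.PosSemidef) (hM : M.PosSemidef) (X : Matrix n n ℂ) :
    ∑ p, prepareKraus R M p * X * (prepareKraus R M p)ᴴ = (M * X).trace • R := by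
  have h (p : m × n) : prepareKraus R M p * X * (prepareKraus R M p)ᴴ =
      CFC.sqrt R * ((CFC.sqrt M * X * CFC.sqrt M) p.2 p.2 • single p.1 p.1 (1 : ℂ)) *
        CFC.sqrt R := by
    have : single p.1 p.2 (1 : ℂ) * (CFC.sqrt M * X * CFC.sqrt M) * single p.2 p.1 (1 : ℂ) =
        (CFC.sqrt M * X * CFC.sqrt M) p.2 p.2 • single p.1 p.1 (1 : ℂ) := by
      rw [single_mul_mul_single, smul_single]
      simp
    simp only [prepareKraus, conjTranspose_mul, Matrix.conjTranspose_cfcSqrt,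
      conjTranspose_single, star_one]
    rw [← this]
    simp only [Matrix.mul_assoc]
  rw [Fintype.sum_prod_type, Finset.sum_comm]
  simp only [h, ← Finset.mul_sum, ← Finset.sum_mul, ← Finset.smul_sum,
    sum_single_one, ← Finset.sum_smul]
  change CFC.sqrt R * (CFC.sqrt M * X * CFC.sqrt M).trace • 1 * CFC.sqrt R = _
  rw [Matrix.mul_smul, Matrix.smul_mul, Matrix.mul_one, CFC.sqrt_mul_sqrt_self R hR.nonneg,
    Matrix.trace_mul_cycle, CFC.sqrt_mul_sqrt_self M hM.nonneg]

end MeasureAndPrepare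

namespace QChannel

variable {d₁ d₂ : ℕ}

noncomputable def ofKraus {ι : Type*} [Fintype ι] (K : ι → Matrix (Fin d₂) (Fin d₁) ℂ)
    (hK : ∑ i, (K i)ᴴ * K i = 1) : QChannel d₁ d₂ where
  k := Fintype.card ι
  K := K ∘ (Fintype.equivFin ι).symm
  tp := by rw [← hK]; exact Equiv.sum_comp _ fun i => (K i)ᴴ * K i

lemma ofKraus_apply {ι : Type*} [Fintype ι] (K : ι → Matrix (Fin d₂) (Fin d₁) ℂ)
    (hK : ∑ i, (K i)ᴴ * K i = 1) (X : Matrix (Fin d₁) (Fin d₁) ℂ) :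
    (ofKraus K hK).apply X = ∑ i, K i * X * (K i)ᴴ :=
  Equiv.sum_comp _ fun i => K i * X * (K i)ᴴ

noncomputable def measurePrepare {Q : Matrix (Fin d₁) (Fin d₁) ℂ} {ρ σ : Matrix (Fin d₂) (Fin d₂) ℂ}
    (hQ : Q.PosSemidef) (hQ1 : (1 - Q).PosSemidef) (hρ : IsDensity ρ) (hσ : IsDensity σ) :
    QChannel d₁ d₂ :=
  ofKraus (Sum.elim (prepareKraus ρ Q) (prepareKraus σ (1 - Q))) <| by
    rw [Fintype.sum_sum_type]
    simp only [Sum.elim_inl, Sum.elim_inr]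
    rw [sum_prepareKraus_conjTranspose_mul hρ.1 hQ, sum_prepareKraus_conjTranspose_mul hσ.1 hQ1,
      hρ.2, hσ.2, one_smul, one_smul, add_sub_cancel]

variable {Q : Matrix (Fin d₁) (Fin d₁) ℂ} {ρ σ : Matrix (Fin d₂) (Fin d₂) ℂ}
  (hQ : Q.PosSemidef) (hQ1 : (1 - Q).PosSemidef) (hρ : IsDensity ρ) (hσ : IsDensity σ)

lemma measurePrepare_apply (X : Matrix (Fin d₁) (Fin d₁) ℂ) :
    (measurePrepare hQ hQ1 hρ hσ).apply X = (Q * X).trace • ρ + ((1 - Q) * X).trace • σ := by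
  rw [measurePrepare, ofKraus_apply, Fintype.sum_sum_type]
  simp only [Sum.elim_inl, Sum.elim_inr]
  rw [sum_prepareKraus_mul_mul_conjTranspose hρ.1 hQ,
    sum_prepareKraus_mul_mul_conjTranspose hσ.1 hQ1]

lemma measurePrepare_apply_sub_left {X : Matrix (Fin d₁) (Fin d₁) ℂ} (hX : X.trace = 1) :
    (measurePrepare hQ hQ1 hρ hσ).apply X - ρ =
      ((1 - Q) * X).trace • σ - ((1 - Q) * X).trace • ρ := by
  rw [measurePrepare_apply, eq_sub_of_add_eq ((Q.trace_mul_add_trace_one_sub_mul X).trans hX)]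
  module

lemma measurePrepare_apply_sub_right {X : Matrix (Fin d₁) (Fin d₁) ℂ} (hX : X.trace = 1) :
    (measurePrepare hQ hQ1 hρ hσ).apply X - σ = (Q * X).trace • ρ - (Q * X).trace • σ := by
  rw [measurePrepare_apply, eq_sub_of_add_eq' ((Q.trace_mul_add_trace_one_sub_mul X).trans hX)]
  module

end QChannel

/-- Breakdown of the Blackwell ordering: if there is a test `Q` with
`Tr((1−Q)ρ₁) ≤ ε_ρ` and `Tr(Qσ₁) ≤ ε_σ`, then for every choice of target states
there exists a quantum channel `E` with `T(E(ρ₁),ρ₂) ≤ ε_ρ` and `T(E(σ₁),σ₂) ≤ ε_σ`. -/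
theorem channel_of_test {d₁ d₂ : ℕ} (ρ₁ σ₁ : Matrix (Fin d₁) (Fin d₁) ℂ)
    (hρ₁ : IsDensity ρ₁) (hσ₁ : IsDensity σ₁) (ε_ρ ε_σ : ℝ)
    (Q : Matrix (Fin d₁) (Fin d₁) ℂ) (hQ : Q.PosSemidef) (hQ1 : (1 - Q).PosSemidef)
    (h1 : (((1 - Q) * ρ₁).trace).re ≤ ε_ρ) (h2 : ((Q * σ₁).trace).re ≤ ε_σ)
    (ρ₂ σ₂ : Matrix (Fin d₂) (Fin d₂) ℂ) (hρ₂ : IsDensity ρ₂) (hσ₂ : IsDensity σ₂) :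
    ∃ E : QChannel d₁ d₂,
      traceDist (E.apply ρ₁) ρ₂ ≤ ε_ρ ∧ traceDist (E.apply σ₁) σ₂ ≤ ε_σ := by
  refine ⟨QChannel.measurePrepare hQ hQ1 hρ₂ hσ₂, ?_, ?_⟩
  · exact (traceDist_le_of_sub_eq_smul hρ₂ hσ₂ (hQ1.trace_mul_nonneg hρ₁.1)
      (QChannel.measurePrepare_apply_sub_left hQ hQ1 hρ₂ hσ₂ hρ₁.2)).trans h1
  · exact (traceDist_le_of_sub_eq_smul hσ₂ hρ₂ (hQ.trace_mul_nonneg hσ₁.1)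
      (QChannel.measurePrepare_apply_sub_right hQ hQ1 hρ₂ hσ₂ hσ₁.2)).trans h2
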